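/- arXiv:2503.18831 — 3 statements merged into one kernel-verified Lean document; each statement's English description precedes it below -/
import Mathlib

section
/- Let P be an absolutely continuous probability measure on ℝ^d whose support has Lebesgue-negligible boundary and whose interior of support is connected. Then for every unit vector θ, the pushforward P^θ of P under the projection x ↦ ⟨θ, x⟩ is absolutely continuous, its support has negligible boundary, and the interior of its support is connected (an interval). -/
open MeasureTheory

noncomputable section

/-- The support of a measure: points all of whose open neighbourhoods have positive measure. -/
def msupport {α : Type*} [TopologicalSpace α] [MeasurableSpace α] (μ : Measure α) : Set α :=
  {x | ∀ U : Set α, IsOpen U → x ∈ U → 0 < μ U}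

/-!
Write `L = ⟪θ, ·⟫`, a surjective linear functional, and `S` for the interior of the support of
`P`. Since `P` has no mass outside its support and none on its null boundary, `S` carries all of
`P`; hence the support of `P^θ` lies between the open interval `I = L '' S` and its closure. So
the interior of that support is squeezed between `I` and `closure I`, which makes it connected,
and the rest of the support lies in the frontier of `I`, at most two points. Absolute continuity
holds because `L` maps Lebesgue measure to a multiple of Lebesgue measure.
-/

lemma msupport_eq_support {α : Type*} [TopologicalSpace α] [MeasurableSpace α]
    (μ : Measure α) : msupport μ = μ.support := by
  rw [Measure.support_eq_forall_isOpen]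
  ext x
  exact forall_congr' fun U => forall_comm

namespace MeasureTheory.Measure

variable {X Y : Type*} [MeasurableSpace X] [TopologicalSpace Y] [MeasurableSpace Y]

lemma image_support_subset_support_map [TopologicalSpace X] [OpensMeasurableSpace X]
    [BorelSpace Y] (μ : Measure X) {f : X → Y} (hf : Continuous f) :
    f '' μ.support ⊆ (μ.map f).support := by
  rintro _ ⟨x, hx, rfl⟩
  rw [support_eq_forall_isOpen] at hx ⊢
  intro U hxU hU
  rw [map_apply hf.measurable hU.measurableSet]
  exact hx _ hxU (hU.preimage hf)

lemma support_map_subset_closure_image [OpensMeasurableSpace Y] (μ : Measure X) {f : X → Y}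
    (hf : Measurable f) {s : Set X} (hs : s ∈ ae μ) :
    (μ.map f).support ⊆ closure (f '' s) := by
  refine support_subset_of_isClosed isClosed_closure ?_
  rw [mem_ae_map_iff hf.aemeasurable isClosed_closure.measurableSet]
  exact Filter.mem_of_superset hs fun x hx => subset_closure ⟨x, hx, rfl⟩

lemma interior_support_mem_ae [TopologicalSpace X] [HereditarilyLindelofSpace X]
    {μ : Measure X} (h : μ (μ.support \ interior μ.support) = 0) :
    interior μ.support ∈ ae μ := by
  filter_upwards [support_mem_ae, measure_eq_zero_iff_ae_notMem.1 h] with x hx hxb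
  by_contra hxi
  exact hxb ⟨hx, hxi⟩

end MeasureTheory.Measure

lemma MeasureTheory.Measure.AbsolutelyContinuous.map_of_surjective
    {𝕜 E F : Type*} [NontriviallyNormedField 𝕜] [CompleteSpace 𝕜]
    [NormedAddCommGroup E] [MeasurableSpace E] [BorelSpace E] [NormedSpace 𝕜 E]
    [LocallyCompactSpace E]
    [NormedAddCommGroup F] [MeasurableSpace F] [BorelSpace F] [NormedSpace 𝕜 F]
    {μ ν : Measure E} [ν.IsAddHaarMeasure] (ρ : Measure F) [ρ.IsAddHaarMeasure]
    (hμν : μ ≪ ν) {L : E →L[𝕜] F} (hL : Function.Surjective L) :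
    μ.map L ≪ ρ := by
  obtain ⟨c, -, hc⟩ := (L : E →ₗ[𝕜] F).exists_map_addHaar_eq_smul_addHaar ν ρ hL
  rw [ContinuousLinearMap.coe_coe] at hc
  exact (hμν.map L.continuous.measurable).trans (hc ▸ Measure.smul_absolutelyContinuous)

lemma Set.OrdConnected.null_frontier_real {s : Set ℝ} (hs : s.OrdConnected) :
    volume (frontier s) = 0 := by
  rw [← (volume_preserving_funUnique (Fin 1) ℝ).measure_preimage_equiv]
  exact (Homeomorph.funUnique (Fin 1) ℝ).preimage_frontier s ▸
    (hs.preimage_mono (OrderIso.funUnique (Fin 1) ℝ).monotone).null_frontier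

lemma diff_interior_subset_frontier_of_subset_closure {α : Type*} [TopologicalSpace α]
    {I T : Set α} (hI : IsOpen I) (hIT : I ⊆ T) (hTI : T ⊆ closure I) :
    T \ interior T ⊆ frontier I := by
  rintro x ⟨hxT, hxi⟩
  rw [hI.frontier_eq]
  exact ⟨hTI hxT, fun hxI => hxi (interior_maximal hIT hI hxI)⟩

lemma IsConnected.interior_of_subset_closure {α : Type*} [TopologicalSpace α]
    {I T : Set α} (hIc : IsConnected I) (hI : IsOpen I) (hIT : I ⊆ T) (hTI : T ⊆ closure I) :
    IsConnected (interior T) :=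
  hIc.subset_closure (interior_maximal hIT hI) (interior_subset.trans hTI)

theorem statement0_general {d : ℕ} (P : Measure (EuclideanSpace ℝ (Fin d)))
    (hac : P ≪ volume)
    (hbd : volume (msupport P \ interior (msupport P)) = 0)
    (hconn : IsConnected (interior (msupport P)))
    (θ : EuclideanSpace ℝ (Fin d)) (hθ : ‖θ‖ = 1) :
    (P.map fun x => (inner ℝ θ x : ℝ)) ≪ (volume : Measure ℝ) ∧
    volume (msupport (P.map fun x => (inner ℝ θ x : ℝ)) \
      interior (msupport (P.map fun x => (inner ℝ θ x : ℝ)))) = 0 ∧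
    IsConnected (interior (msupport (P.map fun x => (inner ℝ θ x : ℝ)))) := by
  set L := innerSL ℝ θ
  have hL : Function.Surjective L := fun t => ⟨t • θ, by simp [L, hθ]⟩
  rw [show (fun x => (inner ℝ θ x : ℝ)) = L from rfl]
  simp only [msupport_eq_support] at hbd hconn ⊢
  set I := L '' interior P.support
  have hIo : IsOpen I := L.isOpenMap hL _ isOpen_interior
  have hIc : IsConnected I := hconn.image L L.continuous.continuousOn
  have hIQ : I ⊆ (P.map L).support :=
    (Set.image_mono interior_subset).trans (P.image_support_subset_support_map L.continuous)
  have hQI : (P.map L).support ⊆ closure I :=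
    P.support_map_subset_closure_image L.continuous.measurable
      (Measure.interior_support_mem_ae (hac hbd))
  exact ⟨hac.map_of_surjective volume hL,
    measure_mono_null (diff_interior_subset_frontier_of_subset_closure hIo hIQ hQI)
      hIc.isPreconnected.ordConnected.null_frontier_real,
    hIc.interior_of_subset_closure hIo hIQ hQI⟩

/-- If `P` is an absolutely continuous probability measure on `ℝ^d` whose support
has Lebesgue-negligible boundary and connected interior of support, then for every unit vector
`θ` the pushforward `P^θ` of `P` under `x ↦ ⟨θ, x⟩` is absolutely continuous, its support has
negligible boundary, and the interior of its support is connected. -/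
theorem statement0 {d : ℕ} (P : Measure (EuclideanSpace ℝ (Fin d)))
    [IsProbabilityMeasure P] (hac : P ≪ volume)
    (hbd : volume (msupport P \ interior (msupport P)) = 0)
    (hconn : IsConnected (interior (msupport P)))
    (θ : EuclideanSpace ℝ (Fin d)) (hθ : ‖θ‖ = 1) :
    (P.map fun x => (inner ℝ θ x : ℝ)) ≪ (volume : Measure ℝ) ∧
    volume (msupport (P.map fun x => (inner ℝ θ x : ℝ)) \
      interior (msupport (P.map fun x => (inner ℝ θ x : ℝ)))) = 0 ∧
    IsConnected (interior (msupport (P.map fun x => (inner ℝ θ x : ℝ)))) :=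
  statement0_general P hac hbd hconn θ hθ
end
end

section
/- Let X₁,…,Xₙ be i.i.d. random variables and f a symmetric measurable function of n arguments with Z = f(X₁,…,Xₙ) square-integrable. If (X₁',…,Xₙ') is an independent copy and Z' = f(X₁', X₂,…,Xₙ), then Var(Z) ≤ n · E[(Z − Z')₊²]. -/
/-!
Write `M_s f` for `f` with the coordinates in `s` integrated out against the product measure.
Each `M_s` is an `L²`-contraction and `M_{k}` is an orthogonal projection commuting with `M_s`, so
`‖M_s f‖² - ‖M_{s ∪ {k}} f‖² = ‖M_s (f - M_{k} f)‖² ≤ ‖f - M_{k} f‖²`. Telescoping from `s = ∅`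
(where `M_s f = f`) to `s = univ` (where `M_s f = 𝔼 f`) gives the Efron–Stein inequality
`Var f ≤ ∑ₖ ‖f - M_{k} f‖²`. Each term is `𝔼 (f x - f x⁽ᵏ⁾)² / 2`, where `x⁽ᵏ⁾` resamples the
`k`-th coordinate, and equals `𝔼 (f x - f x⁽ᵏ⁾)₊²` since exchanging `x` and `x⁽ᵏ⁾` flips the sign
of the difference. By symmetry of `f` and exchangeability of the coordinates, the `n` terms agree.
-/

open MeasureTheory ProbabilityTheory

noncomputable section

theorem MeasureTheory.MeasurePreserving.integral_comp_of_aestronglyMeasurable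
    {α β : Type*} [MeasurableSpace α] [MeasurableSpace β] {μ : Measure α} {ν : Measure β}
    {T : α → β} (hT : MeasurePreserving T μ ν) {g : β → ℝ} (hg : AEStronglyMeasurable g ν) :
    ∫ x, g (T x) ∂μ = ∫ y, g y ∂ν := by
  rw [← hT.map_eq] at hg ⊢
  exact (integral_map hT.aemeasurable hg).symm

theorem sq_integral_le_integral_sq {α : Type*} [MeasurableSpace α] {ν : Measure α}
    [IsProbabilityMeasure ν] {g : α → ℝ} (hg : MemLp g 2 ν) :
    (∫ a, g a ∂ν) ^ 2 ≤ ∫ a, g a ^ 2 ∂ν := by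
  have := variance_nonneg g ν
  rw [variance_eq_sub hg] at this
  simpa using this

theorem integral_sub_sq {α : Type*} [MeasurableSpace α] {ν : Measure α} {g h : α → ℝ}
    (hg : MemLp g 2 ν) (hh : MemLp h 2 ν) :
    ∫ a, (g a - h a) ^ 2 ∂ν = ∫ a, g a ^ 2 ∂ν - 2 * ∫ a, g a * h a ∂ν + ∫ a, h a ^ 2 ∂ν := by
  have hgh : Integrable (fun a => g a * h a) ν := hg.integrable_mul hh
  have hg2h : Integrable (fun a => g a ^ 2 - 2 * (g a * h a)) ν :=
    hg.integrable_sq.sub (hgh.const_mul 2)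
  simp only [sub_sq, mul_assoc]
  rw [integral_add hg2h hh.integrable_sq,
    integral_sub hg.integrable_sq (hgh.const_mul 2), integral_const_mul]

theorem max_zero_sq_add_max_neg_zero_sq (a : ℝ) : max a 0 ^ 2 + max (-a) 0 ^ 2 = a ^ 2 := by
  rcases le_total a 0 with h | h <;> simp [h]

theorem two_mul_integral_max_zero_sq {α : Type*} [MeasurableSpace α] {ν : Measure α}
    {T : α → α} (hT : MeasurePreserving T ν ν) {D : α → ℝ} (hD : MemLp D 2 ν)
    (hDT : ∀ a, D (T a) = -D a) :
    2 * ∫ a, max (D a) 0 ^ 2 ∂ν = ∫ a, D a ^ 2 ∂ν := by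
  have hint {F : α → ℝ} (hF : MemLp F 2 ν) : Integrable (fun a => max (F a) 0 ^ 2) ν := by
    refine hF.integrable_sq.mono'
      ((hF.1.aemeasurable.max aemeasurable_const).pow_const 2).aestronglyMeasurable
      (.of_forall fun a => ?_)
    rw [Real.norm_of_nonneg (sq_nonneg _)]
    rcases le_total (F a) 0 with h | h <;> simp [h, sq_nonneg]
  have hneg : Integrable (fun a => max (-D a) 0 ^ 2) ν := hint hD.neg
  have hswap : ∫ a, max (-D a) 0 ^ 2 ∂ν = ∫ a, max (D a) 0 ^ 2 ∂ν := by
    simp only [← hDT]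
    exact hT.integral_comp_of_aestronglyMeasurable (hint hD).1
  rw [← integral_congr_ae (.of_forall fun a => max_zero_sq_add_max_neg_zero_sq (D a)),
    integral_add (hint hD) hneg, hswap, two_mul]

theorem Finset.piecewise_piecewise_union {ι α : Type*} [DecidableEq ι] (s t : Finset ι)
    (x y z : ι → α) :
    t.piecewise z (s.piecewise y x) = (s ∪ t).piecewise (t.piecewise z y) x := by
  ext i
  simp only [Finset.piecewise, Finset.mem_union]
  split_ifs <;> tauto

theorem measurePreserving_comp_perm {ι E : Type*} [Fintype ι] [MeasurableSpace E]
    (P : Measure E) [IsProbabilityMeasure P] (σ : Equiv.Perm ι) :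
    MeasurePreserving (fun x : ι → E => x ∘ σ) (Measure.pi fun _ => P) (Measure.pi fun _ => P) := by
  convert measurePreserving_arrowCongr' (fun _ : ι => P) (fun _ => P) σ.symm (.refl E)
    (fun _ => .id P) using 1
  ext x i
  simp [MeasurableEquiv.arrowCongr', Equiv.arrowCongr', Equiv.arrowCongr]

theorem measurePreserving_prodMk_of_iIndepFun {Ω ι ι' E : Type*} [MeasurableSpace Ω]
    [MeasurableSpace E] [Fintype ι] [Fintype ι'] {Pr : Measure Ω} [IsProbabilityMeasure Pr]
    {X : ι → Ω → E} {Y : ι' → Ω → E} (hX : ∀ i, Measurable (X i)) (hY : ∀ j, Measurable (Y j))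
    (hXY : iIndepFun (Sum.elim X Y) Pr) {μ : ι → Measure E} {ν : ι' → Measure E}
    [∀ i, SigmaFinite (μ i)] [∀ j, SigmaFinite (ν j)]
    (hμ : ∀ i, Pr.map (X i) = μ i) (hν : ∀ j, Pr.map (Y j) = ν j) :
    MeasurePreserving (fun ω => (fun i => X i ω, fun j => Y j ω)) Pr
      ((Measure.pi μ).prod (Measure.pi ν)) := by
  have hm : ∀ k, Measurable (Sum.elim X Y k) := Sum.forall.2 ⟨hX, hY⟩
  have : ∀ k, SigmaFinite (Sum.elim μ ν k) := by
    rintro (i | j) <;> dsimp <;> infer_instance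
  have hjoint :
      MeasurePreserving (fun ω k => Sum.elim X Y k ω) Pr (Measure.pi (Sum.elim μ ν)) := by
    refine ⟨measurable_pi_lambda _ hm, ?_⟩
    rw [(iIndepFun_iff_map_fun_eq_pi_map fun k => (hm k).aemeasurable).1 hXY]
    congr 1
    ext1 k
    cases k <;> simp [hμ, hν]
  exact (measurePreserving_sumPiEquivProdPi (Sum.elim μ ν)).comp hjoint

namespace EfronStein

open Finset

variable {ι E : Type*} [Fintype ι] [DecidableEq ι] [MeasurableSpace E] (μ : ι → Measure E)

/-- `f` with the coordinates in `s` integrated out: the Bochner analogue of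
`MeasureTheory.lmarginal`. -/
def marginal (s : Finset ι) (f : (ι → E) → ℝ) (x : ι → E) : ℝ :=
  ∫ y, f (s.piecewise y x) ∂Measure.pi μ

theorem marginal_univ (f : (ι → E) → ℝ) :
    marginal μ univ f = fun _ => ∫ y, f y ∂Measure.pi μ := by
  ext x; simp [marginal]

theorem marginal_piecewise (s : Finset ι) (f : (ι → E) → ℝ) (x y : ι → E) :
    marginal μ s f (s.piecewise y x) = marginal μ s f x := by
  simp [marginal]

variable [∀ i, IsProbabilityMeasure (μ i)]

theorem measurePreserving_piecewise (s : Finset ι) :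
    MeasurePreserving (fun p : (ι → E) × (ι → E) => s.piecewise p.2 p.1)
      ((Measure.pi μ).prod (Measure.pi μ)) (Measure.pi μ) := by
  have h := (measurePreserving_pi (fun i => (μ i).prod (μ i)) μ
      (f := fun i => if i ∈ s then Prod.snd else Prod.fst)
      (fun i => by split_ifs; exacts [measurePreserving_snd, measurePreserving_fst])).comp
    (measurePreserving_arrowProdEquivProdArrow E E ι μ μ).symm
  convert h using 1
  ext p i
  by_cases hi : i ∈ s <;>
    simp [hi, MeasurableEquiv.arrowProdEquivProdArrow, Equiv.arrowProdEquivProdArrow]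

theorem measurePreserving_piecewise_swap (s : Finset ι) :
    MeasurePreserving (fun p : (ι → E) × (ι → E) => (s.piecewise p.2 p.1, s.piecewise p.1 p.2))
      ((Measure.pi μ).prod (Measure.pi μ)) ((Measure.pi μ).prod (Measure.pi μ)) := by
  have h := (measurePreserving_arrowProdEquivProdArrow E E ι μ μ).comp <|
    (measurePreserving_pi (fun i => (μ i).prod (μ i)) (fun i => (μ i).prod (μ i))
      (f := fun i => if i ∈ s then Prod.swap else id)
      (fun i => by split_ifs; exacts [Measure.measurePreserving_swap, .id _])).comp
    (measurePreserving_arrowProdEquivProdArrow E E ι μ μ).symm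
  convert h using 1
  ext p i <;> by_cases hi : i ∈ s <;>
    simp [hi, MeasurableEquiv.arrowProdEquivProdArrow, Equiv.arrowProdEquivProdArrow]

variable {μ} {f : (ι → E) → ℝ}

@[simp]
theorem marginal_empty (f : (ι → E) → ℝ) : marginal μ ∅ f = f := by
  ext x; simp [marginal]

theorem measurable_marginal (hf : Measurable f) (s : Finset ι) :
    Measurable (marginal μ s f) :=
  (hf.comp (measurePreserving_piecewise μ s).measurable).stronglyMeasurable
    |>.integral_prod_right' |>.measurable

theorem integrable_marginal (hf : Integrable f (Measure.pi μ)) (s : Finset ι) :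
    Integrable (marginal μ s f) (Measure.pi μ) :=
  ((measurePreserving_piecewise μ s).integrable_comp_of_integrable hf).integral_prod_left

theorem integral_marginal (hf : Integrable f (Measure.pi μ)) (s : Finset ι) :
    ∫ x, marginal μ s f x ∂Measure.pi μ = ∫ x, f x ∂Measure.pi μ := by
  have hmix := measurePreserving_piecewise μ s
  exact (integral_prod _ (hmix.integrable_comp_of_integrable hf)).symm.trans
    (hmix.integral_comp_of_aestronglyMeasurable hf.1)

theorem ae_integrable_piecewise (hf : Integrable f (Measure.pi μ)) (s : Finset ι) :
    ∀ᵐ x ∂Measure.pi μ, Integrable (fun y => f (s.piecewise y x)) (Measure.pi μ) :=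
  ((measurePreserving_piecewise μ s).integrable_comp_of_integrable hf).prod_right_ae

theorem marginal_sub_ae {g : (ι → E) → ℝ} (hf : Integrable f (Measure.pi μ))
    (hg : Integrable g (Measure.pi μ)) (s : Finset ι) :
    marginal μ s (f - g) =ᵐ[Measure.pi μ] marginal μ s f - marginal μ s g := by
  filter_upwards [ae_integrable_piecewise hf s, ae_integrable_piecewise hg s] with x hfx hgx
  exact integral_sub hfx hgx

theorem sq_marginal_le_marginal_sq_ae (hf : Measurable f) (hf2 : MemLp f 2 (Measure.pi μ))
    (s : Finset ι) :
    ∀ᵐ x ∂Measure.pi μ, marginal μ s f x ^ 2 ≤ marginal μ s (fun y => f y ^ 2) x := by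
  filter_upwards [ae_integrable_piecewise hf2.integrable_sq s] with x hx
  refine sq_integral_le_integral_sq ((memLp_two_iff_integrable_sq ?_).2 hx)
  exact (hf.comp ((measurePreserving_piecewise μ s).measurable.comp
    measurable_prodMk_left)).aestronglyMeasurable

theorem memLp_marginal (hf : Measurable f) (hf2 : MemLp f 2 (Measure.pi μ)) (s : Finset ι) :
    MemLp (marginal μ s f) 2 (Measure.pi μ) := by
  refine (memLp_two_iff_integrable_sq (measurable_marginal hf s).aestronglyMeasurable).2 ?_
  refine (integrable_marginal hf2.integrable_sq s).mono'
    ((measurable_marginal hf s).pow_const 2).aestronglyMeasurable ?_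
  filter_upwards [sq_marginal_le_marginal_sq_ae hf hf2 s] with x hx
  rwa [Real.norm_of_nonneg (sq_nonneg _)]

theorem integral_sq_marginal_le (hf : Measurable f) (hf2 : MemLp f 2 (Measure.pi μ))
    (s : Finset ι) :
    ∫ x, marginal μ s f x ^ 2 ∂Measure.pi μ ≤ ∫ x, f x ^ 2 ∂Measure.pi μ := by
  rw [← integral_marginal hf2.integrable_sq s]
  exact integral_mono_ae (memLp_marginal hf hf2 s).integrable_sq
    (integrable_marginal hf2.integrable_sq s) (sq_marginal_le_marginal_sq_ae hf hf2 s)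

theorem integral_mul_marginal {g : (ι → E) → ℝ} (hf : Measurable f)
    (hf2 : MemLp f 2 (Measure.pi μ)) (hg : Measurable g) (hg2 : MemLp g 2 (Measure.pi μ))
    (s : Finset ι) :
    ∫ x, f x * marginal μ s g x ∂Measure.pi μ
      = ∫ x, marginal μ s f x * marginal μ s g x ∂Measure.pi μ := by
  have hmix := measurePreserving_piecewise μ s
  have hint : Integrable
      (fun p : (ι → E) × (ι → E) => f (s.piecewise p.2 p.1) * marginal μ s g p.1)
      ((Measure.pi μ).prod (Measure.pi μ)) :=
    (hf2.comp_measurePreserving hmix).integrable_mul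
      ((memLp_marginal hg hg2 s).comp_measurePreserving (measurePreserving_fst))
  calc ∫ x, f x * marginal μ s g x ∂Measure.pi μ
      = ∫ p, f (s.piecewise p.2 p.1) * marginal μ s g (s.piecewise p.2 p.1)
          ∂(Measure.pi μ).prod (Measure.pi μ) :=
        (hmix.integral_comp_of_aestronglyMeasurable
          (hf.mul (measurable_marginal hg s)).aestronglyMeasurable).symm
    _ = ∫ p, f (s.piecewise p.2 p.1) * marginal μ s g p.1
          ∂(Measure.pi μ).prod (Measure.pi μ) := by
        simp only [marginal_piecewise]
    _ = ∫ x, marginal μ s f x * marginal μ s g x ∂Measure.pi μ := by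
        rw [integral_prod _ hint]
        simp only [integral_mul_const, marginal]

theorem integral_sq_sub_marginal (hf : Measurable f) (hf2 : MemLp f 2 (Measure.pi μ))
    (s : Finset ι) :
    ∫ x, (f x - marginal μ s f x) ^ 2 ∂Measure.pi μ
      = ∫ x, f x ^ 2 ∂Measure.pi μ - ∫ x, marginal μ s f x ^ 2 ∂Measure.pi μ := by
  rw [integral_sub_sq hf2 (memLp_marginal hf hf2 s), integral_mul_marginal hf hf2 hf hf2]
  simp only [← sq]
  ring

theorem marginal_marginal_ae (hf : Measurable f) (hfi : Integrable f (Measure.pi μ))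
    (s t : Finset ι) :
    marginal μ s (marginal μ t f) =ᵐ[Measure.pi μ] marginal μ (s ∪ t) f := by
  have hmix (u : Finset ι) := measurePreserving_piecewise μ u
  have hT : MeasurePreserving (fun q : (ι → E) × (ι → E) × (ι → E) =>
        t.piecewise q.2.2 (s.piecewise q.2.1 q.1))
      ((Measure.pi μ).prod ((Measure.pi μ).prod (Measure.pi μ))) (Measure.pi μ) :=
    (hmix t).comp (((hmix s).prod (.id _)).comp
      (measurePreserving_prodAssoc _ _ _).symm)
  filter_upwards [(hT.integrable_comp_of_integrable hfi).prod_right_ae] with x hx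
  calc marginal μ s (marginal μ t f) x
      = ∫ q, f (t.piecewise q.2 (s.piecewise q.1 x)) ∂(Measure.pi μ).prod (Measure.pi μ) :=
        (integral_prod _ hx).symm
    _ = ∫ q, f ((s ∪ t).piecewise (t.piecewise q.2 q.1) x)
          ∂(Measure.pi μ).prod (Measure.pi μ) := by
        simp only [Finset.piecewise_piecewise_union]
    _ = marginal μ (s ∪ t) f x :=
        (hmix t).integral_comp_of_aestronglyMeasurable
          (g := fun w => f ((s ∪ t).piecewise w x))
          (hf.comp ((hmix (s ∪ t)).measurable.comp measurable_prodMk_left)).aestronglyMeasurable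

theorem integral_sq_marginal_sub_insert_le (hf : Measurable f)
    (hf2 : MemLp f 2 (Measure.pi μ)) (s : Finset ι) (k : ι) :
    ∫ x, marginal μ s f x ^ 2 ∂Measure.pi μ - ∫ x, marginal μ (insert k s) f x ^ 2 ∂Measure.pi μ
      ≤ ∫ x, (f x - marginal μ {k} f x) ^ 2 ∂Measure.pi μ := by
  have hfi := hf2.integrable one_le_two
  have hMf := memLp_marginal hf hf2 s
  have hMkf := memLp_marginal hf hf2 {k}
  have h_insert :
      marginal μ (insert k s) f =ᵐ[Measure.pi μ] marginal μ {k} (marginal μ s f) := by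
    rw [Finset.insert_eq]
    exact (marginal_marginal_ae hf hfi {k} s).symm
  have h_comm : marginal μ s f - marginal μ {k} (marginal μ s f)
      =ᵐ[Measure.pi μ] marginal μ s (f - marginal μ {k} f) := by
    have h1 := marginal_marginal_ae hf hfi {k} s
    have h2 := marginal_marginal_ae hf hfi s {k}
    have h3 := marginal_sub_ae hfi (hMkf.integrable one_le_two) s
    rw [Finset.union_comm] at h1
    filter_upwards [h1, h2, h3] with x hx1 hx2 hx3
    simp only [Pi.sub_apply] at hx3 ⊢
    rw [hx1, ← hx2, hx3]
  calc ∫ x, marginal μ s f x ^ 2 ∂Measure.pi μ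
        - ∫ x, marginal μ (insert k s) f x ^ 2 ∂Measure.pi μ
      = ∫ x, marginal μ s f x ^ 2 ∂Measure.pi μ
        - ∫ x, marginal μ {k} (marginal μ s f) x ^ 2 ∂Measure.pi μ := by
        congr 1
        exact integral_congr_ae (h_insert.fun_comp (· ^ 2))
    _ = ∫ x, (marginal μ s f x - marginal μ {k} (marginal μ s f) x) ^ 2 ∂Measure.pi μ :=
        (integral_sq_sub_marginal (measurable_marginal hf s) hMf {k}).symm
    _ = ∫ x, marginal μ s (f - marginal μ {k} f) x ^ 2 ∂Measure.pi μ :=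
        integral_congr_ae (h_comm.fun_comp (· ^ 2))
    _ ≤ ∫ x, (f x - marginal μ {k} f x) ^ 2 ∂Measure.pi μ :=
        integral_sq_marginal_le (hf.sub (measurable_marginal hf {k})) (hf2.sub hMkf) s

theorem integral_sq_sub_integral_sq_marginal_le (hf : Measurable f)
    (hf2 : MemLp f 2 (Measure.pi μ)) (s : Finset ι) :
    ∫ x, f x ^ 2 ∂Measure.pi μ - ∫ x, marginal μ s f x ^ 2 ∂Measure.pi μ
      ≤ ∑ k ∈ s, ∫ x, (f x - marginal μ {k} f x) ^ 2 ∂Measure.pi μ := by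
  induction s using Finset.induction_on with
  | empty => simp
  | insert k s hk ih =>
    rw [Finset.sum_insert hk]
    linarith [integral_sq_marginal_sub_insert_le hf hf2 s k]

theorem variance_le_sum_integral_sq_sub_marginal (hf : Measurable f)
    (hf2 : MemLp f 2 (Measure.pi μ)) :
    variance f (Measure.pi μ) ≤ ∑ k, ∫ x, (f x - marginal μ {k} f x) ^ 2 ∂Measure.pi μ := by
  have h := integral_sq_sub_integral_sq_marginal_le hf hf2 univ
  rw [marginal_univ, integral_const] at h
  rw [variance_eq_sub hf2]
  simpa using h

theorem integral_sq_sub_piecewise (hf : Measurable f) (hf2 : MemLp f 2 (Measure.pi μ))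
    (s : Finset ι) :
    ∫ p, (f p.1 - f (s.piecewise p.2 p.1)) ^ 2 ∂(Measure.pi μ).prod (Measure.pi μ)
      = 2 * ∫ x, (f x - marginal μ s f x) ^ 2 ∂Measure.pi μ := by
  have hmix := measurePreserving_piecewise μ s
  have hfst : MeasurePreserving Prod.fst ((Measure.pi μ).prod (Measure.pi μ)) (Measure.pi μ) :=
    measurePreserving_fst
  have hsq : AEStronglyMeasurable (fun x => f x ^ 2) (Measure.pi μ) :=
    (hf.pow_const 2).aestronglyMeasurable
  have hf₁ : MemLp (fun p : (ι → E) × (ι → E) => f p.1) 2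
      ((Measure.pi μ).prod (Measure.pi μ)) := hf2.comp_measurePreserving hfst
  have hf₂ : MemLp (fun p : (ι → E) × (ι → E) => f (s.piecewise p.2 p.1)) 2
      ((Measure.pi μ).prod (Measure.pi μ)) := hf2.comp_measurePreserving hmix
  have hcross : ∫ p, f p.1 * f (s.piecewise p.2 p.1) ∂(Measure.pi μ).prod (Measure.pi μ)
      = ∫ x, f x * marginal μ s f x ∂Measure.pi μ := by
    have hint : Integrable (fun p : (ι → E) × (ι → E) => f p.1 * f (s.piecewise p.2 p.1))
        ((Measure.pi μ).prod (Measure.pi μ)) := hf₁.integrable_mul hf₂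
    rw [integral_prod _ hint]
    simp only [integral_const_mul, marginal]
  rw [integral_sub_sq hf₁ hf₂,
    hfst.integral_comp_of_aestronglyMeasurable hsq,
    hmix.integral_comp_of_aestronglyMeasurable hsq, hcross, integral_mul_marginal hf hf2 hf hf2,
    integral_sq_sub_marginal hf hf2]
  simp only [← sq]
  ring

theorem integral_sq_sub_marginal_eq_integral_max_zero_sq (hf : Measurable f)
    (hf2 : MemLp f 2 (Measure.pi μ)) (s : Finset ι) :
    ∫ x, (f x - marginal μ s f x) ^ 2 ∂Measure.pi μ
      = ∫ p, max (f p.1 - f (s.piecewise p.2 p.1)) 0 ^ 2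
          ∂(Measure.pi μ).prod (Measure.pi μ) := by
  have hD : MemLp (fun p : (ι → E) × (ι → E) => f p.1 - f (s.piecewise p.2 p.1)) 2
      ((Measure.pi μ).prod (Measure.pi μ)) :=
    (hf2.comp_measurePreserving measurePreserving_fst).sub
      (hf2.comp_measurePreserving (measurePreserving_piecewise μ s))
  have h := two_mul_integral_max_zero_sq (measurePreserving_piecewise_swap μ s) hD
    (fun p => by simp [Finset.piecewise_same])
  rw [integral_sq_sub_piecewise hf hf2] at h
  linarith

theorem integral_max_zero_sq_update_eq {P : Measure E} [IsProbabilityMeasure P]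
    (hf : Measurable f) (hsymm : ∀ (σ : Equiv.Perm ι) (v : ι → E), f (v ∘ σ) = f v) (j k : ι) :
    ∫ p, max (f p.1 - f (Function.update p.1 j (p.2 j))) 0 ^ 2
        ∂(Measure.pi fun _ => P).prod (Measure.pi fun _ => P)
      = ∫ p, max (f p.1 - f (Function.update p.1 k (p.2 k))) 0 ^ 2
        ∂(Measure.pi fun _ => P).prod (Measure.pi fun _ => P) := by
  have hσ := (measurePreserving_comp_perm P (Equiv.swap j k)).prod
    (measurePreserving_comp_perm P (Equiv.swap j k))
  have hmeas : Measurable fun p : (ι → E) × (ι → E) =>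
      max (f p.1 - f (Function.update p.1 k (p.2 k))) 0 ^ 2 := by
    fun_prop
  rw [← hσ.integral_comp_of_aestronglyMeasurable hmeas.aestronglyMeasurable]
  congr 1
  ext p
  have hupdate : Function.update (p.1 ∘ Equiv.swap j k) k (p.2 j)
      = Function.update p.1 j (p.2 j) ∘ Equiv.swap j k := by
    rw [Function.update_comp_equiv, Equiv.symm_swap, Equiv.swap_apply_left]
  simp [hupdate, hsymm]

end EfronStein

/-- Efron–Stein inequality, symmetric form. If `X₁,…,Xₙ` are i.i.d.,
`f` is a symmetric measurable function with `Z = f(X₁,…,Xₙ)` square-integrable,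
and `Z' = f(X₁', X₂,…,Xₙ)` with `(X₁',…,Xₙ')` an independent copy, then
`Var(Z) ≤ n · E[(Z − Z')₊²]`. -/
theorem statement6 {Ω E : Type*} [MeasurableSpace Ω] [MeasurableSpace E]
    (Pr : Measure Ω) [IsProbabilityMeasure Pr] {n : ℕ} (hn : 0 < n)
    (P : Measure E) [IsProbabilityMeasure P]
    (X X' : Fin n → Ω → E) (hXm : ∀ i, Measurable (X i)) (hX'm : ∀ i, Measurable (X' i))
    (hindep : iIndepFun (Sum.elim X X') Pr)
    (hlaw : ∀ i, Pr.map (X i) = P) (hlaw' : ∀ i, Pr.map (X' i) = P)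
    (f : (Fin n → E) → ℝ) (hf : Measurable f)
    (hsymm : ∀ (e : Equiv.Perm (Fin n)) (v : Fin n → E), f (v ∘ e) = f v)
    (Z Z' : Ω → ℝ)
    (hZ : Z = fun ω => f (fun i => X i ω))
    (hZ' : Z' = fun ω => f (Function.update (fun i => X i ω) ⟨0, hn⟩ (X' ⟨0, hn⟩ ω)))
    (hL2 : MemLp Z 2 Pr) :
    variance Z Pr ≤ n * ∫ ω, (max (Z ω - Z' ω) 0) ^ 2 ∂Pr := by
  subst hZ hZ'
  set π := Measure.pi fun _ : Fin n => P
  have hXX' : MeasurePreserving (fun ω => (fun i => X i ω, fun i => X' i ω)) Pr (π.prod π) :=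
    measurePreserving_prodMk_of_iIndepFun hXm hX'm hindep hlaw hlaw'
  have hX : MeasurePreserving (fun ω i => X i ω) Pr π := measurePreserving_fst.comp hXX'
  have hf2 : MemLp f 2 π := by
    rw [← hX.map_eq]
    exact (memLp_map_measure_iff (hX.map_eq ▸ hf.aestronglyMeasurable) hX.aemeasurable).2 hL2
  have hrhs := hXX'.integral_comp_of_aestronglyMeasurable (g := fun p =>
    max (f p.1 - f (Function.update p.1 ⟨0, hn⟩ (p.2 ⟨0, hn⟩))) 0 ^ 2) (by fun_prop)
  calc _ = variance f π := hX.variance_fun_comp hf.aemeasurable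
    _ ≤ ∑ k, ∫ x, (f x - EfronStein.marginal (fun _ => P) {k} f x) ^ 2 ∂π :=
        EfronStein.variance_le_sum_integral_sq_sub_marginal hf hf2
    _ = ∑ _k : Fin n,
          ∫ p, max (f p.1 - f (Function.update p.1 ⟨0, hn⟩ (p.2 ⟨0, hn⟩))) 0 ^ 2 ∂π.prod π := by
        refine Finset.sum_congr rfl fun k _ => ?_
        rw [EfronStein.integral_sq_sub_marginal_eq_integral_max_zero_sq hf hf2]
        simp only [Finset.piecewise_singleton]
        exact EfronStein.integral_max_zero_sq_update_eq hf hsymm k _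
    _ = _ := by
        rw [Finset.sum_const, Finset.card_univ, Fintype.card_fin, nsmul_eq_mul, hrhs]
end
end

section
/- Let p > 1, β ≥ 1, γ > 0, and let P, Q be probability measures on ℝ with distribution functions F, G having finite moments of order β(p−1)(1+γ). Let Fₙ be the empirical distribution function of n i.i.d. samples from P. Then E[∫₀¹ |h_p'(Fₙ^{-1}(t) − G^{-1}(t)) − h_p'(F^{-1}(t) − G^{-1}(t))|^β dt] → 0 as n → ∞, where h_p'(x) = p·sign(x)|x|^{p−1}. -/
/-!
With `r = β(p-1)`, the bound `|h_p'(x)| ≤ p|x|^{p-1}` dominates the integrand by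
`C (|Fₙ⁻¹|^r + |F⁻¹|^r + |G⁻¹|^r)`. Since `F⁻¹` pushes Lebesgue measure on `(0,1)` forward to `P`,
the integral of this bound is `C` times the sum of the `r`-th absolute moments of `Pₙ`, `P`, `Q`.
By the strong law of large numbers, almost surely `Fₙ → F` at every rational and the empirical
`r`-th moment converges to that of `P`. Then `Fₙ⁻¹(t) → F⁻¹(t)` off the countably many levels `t`
at which `F` is flat, and dominated convergence with convergent dominating functions sends the
inner integral to `0`. The same argument, with dominating functions
`C (empirical moment + moments of P and Q)` of constant expectation, handles the expectation.
-/

open MeasureTheory ProbabilityTheory Filter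
open scoped ENNReal

noncomputable section

/-- The quantile function of a measure on `ℝ`: `F^{-1}(t) = inf {x | t ≤ μ(Iic x)}`. -/
def qf (μ : Measure ℝ) (t : ℝ) : ℝ :=
  sInf {x | ENNReal.ofReal t ≤ μ (Set.Iic x)}

/-- The empirical measure of the first `n` samples. -/
def empMeas {Ω E : Type*} [MeasurableSpace E] (n : ℕ) (X : ℕ → Ω → E) (ω : Ω) : Measure E :=
  (n : ℝ≥0∞)⁻¹ • ∑ i ∈ Finset.range n, Measure.dirac (X i ω)

/-- `h_p'(x) = p · sign(x) · |x|^{p-1}`, the derivative of `h_p(x) = |x|^p`. -/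
def hp' (p x : ℝ) : ℝ := p * Real.sign x * |x| ^ (p - 1)

open Set
open scoped Topology

section Quantile

variable {μ : Measure ℝ} {t x : ℝ}

lemma bddBelow_setOf_le_cdf (ht : 0 < t) : BddBelow {x | t ≤ cdf μ x} := by
  obtain ⟨b, hb⟩ :=
    ((tendsto_cdf_atBot μ).eventually (eventually_lt_nhds ht)).exists_forall_of_atBot
  exact ⟨b, fun x hx => not_lt.1 fun hxb => (hb x hxb.le).not_ge hx⟩

lemma nonempty_setOf_le_cdf (ht : t < 1) : {x | t ≤ cdf μ x}.Nonempty :=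
  ((tendsto_cdf_atTop μ).eventually (eventually_ge_nhds ht)).exists

variable [IsProbabilityMeasure μ]

lemma ofReal_le_measure_Iic_iff : ENNReal.ofReal t ≤ μ (Iic x) ↔ t ≤ cdf μ x := by
  rw [← ofReal_cdf, ENNReal.ofReal_le_ofReal_iff (cdf_nonneg μ x)]

lemma qf_eq_sInf_cdf : qf μ t = sInf {x | t ≤ cdf μ x} := by
  simp only [qf, ofReal_le_measure_Iic_iff]

lemma le_cdf_qf (ht : t ∈ Ioo 0 1) : t ≤ cdf μ (qf μ t) := by
  rw [qf_eq_sInf_cdf]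
  refine ge_of_tendsto (((cdf μ).right_continuous _).mono Ioi_subset_Ici_self)
    (eventually_nhdsWithin_of_forall fun x hx => ?_)
  obtain ⟨y, hy, hyx⟩ := exists_lt_of_csInf_lt (nonempty_setOf_le_cdf ht.2) hx
  exact hy.trans (monotone_cdf μ hyx.le)

lemma qf_le_iff (ht : t ∈ Ioo 0 1) : qf μ t ≤ x ↔ t ≤ cdf μ x :=
  ⟨fun h => (le_cdf_qf ht).trans (monotone_cdf μ h),
    fun h => qf_eq_sInf_cdf (μ := μ) ▸ csInf_le (bddBelow_setOf_le_cdf ht.1) h⟩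

lemma monotoneOn_qf : MonotoneOn (qf μ) (Ioo 0 1) :=
  fun _ ha _ hb hab => (qf_le_iff ha).2 (hab.trans (le_cdf_qf hb))

lemma aemeasurable_qf : AEMeasurable (qf μ) (volume.restrict (Ioo 0 1)) :=
  aemeasurable_restrict_of_monotoneOn measurableSet_Ioo monotoneOn_qf

lemma map_qf : (volume.restrict (Ioo (0 : ℝ) 1)).map (qf μ) = μ := by
  refine Measure.ext_of_Iic _ _ fun x => ?_
  have hset : qf μ ⁻¹' Iic x ∩ Ioo 0 1 = Ioo 0 1 ∩ Iic (cdf μ x) := by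
    ext t
    simp only [mem_inter_iff, mem_preimage, mem_Iic]
    exact ⟨fun h => ⟨h.2, (qf_le_iff h.2).1 h.1⟩, fun h => ⟨(qf_le_iff h.1).2 h.2, h.1⟩⟩
  calc (volume.restrict (Ioo (0 : ℝ) 1)).map (qf μ) (Iic x)
      = volume (Ioo 0 1 ∩ Iic (cdf μ x)) := by
        rw [Measure.map_apply_of_aemeasurable aemeasurable_qf measurableSet_Iic,
          Measure.restrict_apply' measurableSet_Ioo, hset]
    _ = volume (Ioc 0 (1 ⊓ cdf μ x)) := by
        rw [← Ioc_inter_Iic]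
        exact measure_congr (Ioo_ae_eq_Ioc.inter EventuallyEq.rfl)
    _ = μ (Iic x) := by
        rw [Real.volume_Ioc, inf_eq_right.2 (cdf_le_one μ x), sub_zero, ofReal_cdf]

lemma lintegral_comp_qf {f : ℝ → ℝ≥0∞} (hf : Measurable f) :
    ∫⁻ t in Ioo 0 1, f (qf μ t) = ∫⁻ x, f x ∂μ := by
  rw [← lintegral_map' hf.aemeasurable aemeasurable_qf, map_qf]

lemma measurable_indicator_qf {α : Type*} [MeasurableSpace α] {κ : α → Measure ℝ}
    [∀ a, IsProbabilityMeasure (κ a)] (hκ : ∀ x, Measurable fun a => cdf (κ a) x) :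
    Measurable fun z : α × ℝ => (Ioo 0 1).indicator (qf (κ z.1)) z.2 := by
  refine measurable_of_Iic fun x => ?_
  have hpre : (fun z : α × ℝ => (Ioo 0 1).indicator (qf (κ z.1)) z.2) ⁻¹' Iic x =
      {z | z.2 ∈ Ioo 0 1} ∩ {z | z.2 ≤ cdf (κ z.1) x} ∪ {z | z.2 ∈ Ioo 0 1}ᶜ ∩ {_z | 0 ≤ x} := by
    ext z
    by_cases hz : z.2 ∈ Ioo (0 : ℝ) 1 <;> simp [hz, qf_le_iff, -mem_Ioo]
  have hIoo : MeasurableSet {z : α × ℝ | z.2 ∈ Ioo 0 1} := measurable_snd measurableSet_Ioo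
  rw [hpre]
  exact (hIoo.inter (measurableSet_le measurable_snd ((hκ x).comp measurable_fst))).union
    (hIoo.compl.inter (MeasurableSet.const _))

end Quantile

section QuantileConvergence

/-- The levels at which the graph of `cdf μ` has a horizontal stretch; `qf μ` jumps there. -/
def cdfFlatLevels (μ : Measure ℝ) : Set ℝ :=
  {t ∈ Ioo 0 1 | ∃ y, qf μ t < y ∧ cdf μ y ≤ t}

variable {μ : Measure ℝ} [IsProbabilityMeasure μ]

lemma countable_cdfFlatLevels : (cdfFlatLevels μ).Countable := by
  choose! y hqy hy using fun t (ht : t ∈ cdfFlatLevels μ) => ht.2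
  have hsep : ∀ t ∈ cdfFlatLevels μ, ∀ s ∈ cdfFlatLevels μ, t < s → y t ≤ qf μ s :=
    fun t ht s hs hts => not_lt.1 fun h => ((qf_le_iff hs.1).1 h.le).not_gt ((hy t ht).trans_lt hts)
  have hdisj : (cdfFlatLevels μ).PairwiseDisjoint fun t => Ioo (qf μ t) (y t) := by
    intro t ht s hs hne
    rcases hne.lt_or_gt with h | h
    · exact Ioo_disjoint_Ioo.2 (min_le_of_left_le ((hsep t ht s hs h).trans (le_max_right _ _)))
    · exact Ioo_disjoint_Ioo.2 (min_le_of_right_le ((hsep s hs t ht h).trans (le_max_left _ _)))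
  exact hdisj.countable_of_isOpen (fun _ _ => isOpen_Ioo) fun t ht => nonempty_Ioo.2 (hqy t ht)

lemma tendsto_qf_of_tendsto_cdf {μs : ℕ → Measure ℝ} [∀ n, IsProbabilityMeasure (μs n)]
    (hcdf : ∀ q : ℚ, Tendsto (fun n => cdf (μs n) q) atTop (𝓝 (cdf μ q)))
    {t : ℝ} (ht : t ∈ Ioo 0 1) (htf : t ∉ cdfFlatLevels μ) :
    Tendsto (fun n => qf (μs n) t) atTop (𝓝 (qf μ t)) := by
  refine tendsto_order.2 ⟨fun a ha => ?_, fun b hb => ?_⟩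
  · obtain ⟨q, haq, hq⟩ := exists_rat_btwn ha
    have hlt : cdf μ q < t := lt_of_not_ge fun h => hq.not_ge ((qf_le_iff ht).2 h)
    filter_upwards [(hcdf q).eventually_lt_const hlt] with n hn
    exact haq.trans (lt_of_not_ge fun h => hn.not_ge ((qf_le_iff ht).1 h))
  · obtain ⟨q, hq, hqb⟩ := exists_rat_btwn hb
    have hlt : t < cdf μ q := lt_of_not_ge fun h => htf ⟨ht, q, hq, h⟩
    filter_upwards [(hcdf q).eventually_const_lt hlt] with n hn
    exact ((qf_le_iff ht).2 hn.le).trans_lt hqb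

lemma ae_tendsto_qf_of_tendsto_cdf {μs : ℕ → Measure ℝ} [∀ n, IsProbabilityMeasure (μs n)]
    (hcdf : ∀ q : ℚ, Tendsto (fun n => cdf (μs n) q) atTop (𝓝 (cdf μ q))) :
    ∀ᵐ t ∂volume.restrict (Ioo 0 1), Tendsto (fun n => qf (μs n) t) atTop (𝓝 (qf μ t)) := by
  filter_upwards [ae_restrict_mem measurableSet_Ioo,
    ae_restrict_of_ae ((countable_cdfFlatLevels (μ := μ)).ae_notMem volume)] with t ht htf
    using tendsto_qf_of_tendsto_cdf hcdf ht htf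

end QuantileConvergence

@[fun_prop]
lemma Real.measurable_sign : Measurable Real.sign :=
  Measurable.ite measurableSet_Iio measurable_const
    (Measurable.ite measurableSet_Ioi measurable_const measurable_const)

lemma Real.continuousAt_sign_of_ne_zero {x : ℝ} (hx : x ≠ 0) : ContinuousAt Real.sign x := by
  rcases hx.lt_or_gt with h | h
  · exact continuousAt_const.congr <| by
      filter_upwards [eventually_lt_nhds h] with y hy using (Real.sign_of_neg hy).symm
  · exact continuousAt_const.congr <| by
      filter_upwards [eventually_gt_nhds h] with y hy using (Real.sign_of_pos hy).symm

lemma Real.abs_sign_le_one (x : ℝ) : |Real.sign x| ≤ 1 := by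
  rcases Real.sign_apply_eq x with h | h | h <;> simp [h]

section HpDerivative

variable {p : ℝ}

@[fun_prop]
lemma measurable_hp' : Measurable (hp' p) := by
  unfold hp'
  fun_prop

lemma abs_hp'_le (hp : 0 ≤ p) (x : ℝ) : |hp' p x| ≤ p * |x| ^ (p - 1) := by
  rw [hp', abs_mul, abs_mul, abs_of_nonneg hp, abs_of_nonneg (Real.rpow_nonneg (abs_nonneg x) _)]
  calc p * |x.sign| * |x| ^ (p - 1) ≤ p * 1 * |x| ^ (p - 1) := by
        gcongr; exact Real.abs_sign_le_one x
    _ = p * |x| ^ (p - 1) := by ring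

lemma continuous_hp' (hp : 1 < p) : Continuous (hp' p) := by
  have hpow : Continuous fun x : ℝ => |x| ^ (p - 1) :=
    continuous_abs.rpow_const fun _ => Or.inr (by linarith)
  refine continuous_iff_continuousAt.2 fun x => ?_
  rcases eq_or_ne x 0 with rfl | hx
  · have hbound : Tendsto (fun y : ℝ => p * |y| ^ (p - 1)) (𝓝 0) (𝓝 0) :=
      (continuous_const.mul hpow).tendsto' 0 0 (by simp [Real.zero_rpow (by linarith : p - 1 ≠ 0)])
    simpa [ContinuousAt, hp', Real.sign_zero] using
      squeeze_zero_norm (fun y => abs_hp'_le (by linarith) y) hbound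
  · exact (continuousAt_const.mul (Real.continuousAt_sign_of_ne_zero hx)).mul hpow.continuousAt

end HpDerivative

section HpBound

variable {p β : ℝ}

lemma abs_hp'_sub_hp'_le (hp : 1 ≤ p) {a b M : ℝ} (ha : |a| ≤ M) (hb : |b| ≤ M) :
    |hp' p a - hp' p b| ≤ 2 * p * M ^ (p - 1) := by
  have hpow : ∀ {c}, |c| ≤ M → |hp' p c| ≤ p * M ^ (p - 1) := fun hc =>
    (abs_hp'_le (by linarith) _).trans <| by gcongr
  linarith [abs_sub (hp' p a) (hp' p b), hpow ha, hpow hb]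

lemma rpow_max_le_add {x y z r : ℝ} (hx : 0 ≤ x) (hy : 0 ≤ y) (hz : 0 ≤ z) :
    max x (max y z) ^ r ≤ x ^ r + y ^ r + z ^ r := by
  have := Real.rpow_nonneg hx r
  have := Real.rpow_nonneg hy r
  have := Real.rpow_nonneg hz r
  rcases max_choice x (max y z) with h | h <;> rw [h]
  · linarith
  · rcases max_choice y z with h' | h' <;> rw [h'] <;> linarith

lemma abs_hp'_sub_hp'_rpow_le (hp : 1 ≤ p) (hβ : 0 ≤ β) (u v w : ℝ) :
    |hp' p (u - w) - hp' p (v - w)| ^ β ≤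
      (2 ^ p * p) ^ β * (|u| ^ (β * (p - 1)) + |v| ^ (β * (p - 1)) + |w| ^ (β * (p - 1))) := by
  set m := max |u| (max |v| |w|)
  have hm : 0 ≤ m := (abs_nonneg u).trans (le_max_left _ _)
  have hu : |u| ≤ m := le_max_left _ _
  have hv : |v| ≤ m := (le_max_left _ _).trans (le_max_right _ _)
  have hw : |w| ≤ m := (le_max_right _ _).trans (le_max_right _ _)
  have hsub : ∀ {a}, |a| ≤ m → |a - w| ≤ 2 * m := fun ha => (abs_sub _ _).trans (by linarith)
  have hscale : 2 * p * (2 * m) ^ (p - 1) = 2 ^ p * p * m ^ (p - 1) := by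
    rw [Real.mul_rpow zero_le_two hm, Real.rpow_sub_one two_ne_zero]
    field_simp
  calc |hp' p (u - w) - hp' p (v - w)| ^ β
      ≤ (2 ^ p * p * m ^ (p - 1)) ^ β := by
        rw [← hscale]
        exact Real.rpow_le_rpow (abs_nonneg _) (abs_hp'_sub_hp'_le hp (hsub hu) (hsub hv)) hβ
    _ = (2 ^ p * p) ^ β * m ^ (β * (p - 1)) := by
        rw [Real.mul_rpow (by positivity) (by positivity), ← Real.rpow_mul hm, mul_comm (p - 1)]
    _ ≤ (2 ^ p * p) ^ β * (|u| ^ (β * (p - 1)) + |v| ^ (β * (p - 1)) + |w| ^ (β * (p - 1))) := by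
        gcongr
        exact rpow_max_le_add (abs_nonneg u) (abs_nonneg v) (abs_nonneg w)

end HpBound

lemma tendsto_lintegral_zero_of_le_of_tendsto {α : Type*} [MeasurableSpace α] {ν : Measure α}
    {f G : ℕ → α → ℝ≥0∞} {g : α → ℝ≥0∞}
    (hf : ∀ n, AEMeasurable (f n) ν) (hG : ∀ n, AEMeasurable (G n) ν) (hg : AEMeasurable g ν)
    (hfG : ∀ n, f n ≤ᵐ[ν] G n) (hf0 : ∀ᵐ a ∂ν, Tendsto (fun n => f n a) atTop (𝓝 0))
    (hGg : ∀ᵐ a ∂ν, Tendsto (fun n => G n a) atTop (𝓝 (g a)))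
    (hGint : Tendsto (fun n => ∫⁻ a, G n a ∂ν) atTop (𝓝 (∫⁻ a, g a ∂ν)))
    (hg_fin : ∫⁻ a, g a ∂ν ≠ ∞) :
    Tendsto (fun n => ∫⁻ a, f n a ∂ν) atTop (𝓝 0) := by
  -- `f n ≤ min (f n) g + (G n - g)`, and both terms on the right tend to `0` in `L¹`.
  have hmin_f : Tendsto (fun n => ∫⁻ a, min (f n a) (g a) ∂ν) atTop (𝓝 0) := by
    have := tendsto_lintegral_of_dominated_convergence' (f := fun _ => 0) g
      (fun n => (hf n).min hg) (fun n => ae_of_all _ fun a => min_le_right _ _) hg_fin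
      (by filter_upwards [hf0] with a ha using by simpa using ha.min tendsto_const_nhds)
    rwa [lintegral_zero] at this
  have hmin_G : Tendsto (fun n => ∫⁻ a, min (G n a) (g a) ∂ν) atTop (𝓝 (∫⁻ a, g a ∂ν)) :=
    tendsto_lintegral_of_dominated_convergence' g (fun n => (hG n).min hg)
      (fun n => ae_of_all _ fun a => min_le_right _ _) hg_fin
      (by filter_upwards [hGg] with a ha
        using by simpa using ha.min (tendsto_const_nhds (x := g a)))
  have hsplit : ∀ n, ∫⁻ a, G n a - g a ∂ν = ∫⁻ a, G n a ∂ν - ∫⁻ a, min (G n a) (g a) ∂ν := by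
    intro n
    refine ENNReal.eq_sub_of_add_eq ?_ ?_
    · exact ne_top_of_le_ne_top hg_fin (lintegral_mono fun a => min_le_right _ _)
    · rw [← lintegral_add_right' _ ((hG n).min hg)]
      exact lintegral_congr fun a => by
        rcases le_total (G n a) (g a) with h | h
        · simp [h, tsub_eq_zero_of_le h]
        · rw [min_eq_right h, tsub_add_cancel_of_le h]
  have hdiff : Tendsto (fun n => ∫⁻ a, G n a - g a ∂ν) atTop (𝓝 0) := by
    simp_rw [hsplit]
    simpa using ENNReal.Tendsto.sub hGint hmin_G (Or.inl hg_fin)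
  refine tendsto_of_tendsto_of_tendsto_of_le_of_le tendsto_const_nhds
    (by simpa using hmin_f.add hdiff) (fun _ => zero_le) fun n => ?_
  rw [← lintegral_add_left' ((hf n).min hg)]
  refine lintegral_mono_ae ?_
  filter_upwards [hfG n] with a ha
  rcases le_total (f n a) (g a) with h | h
  · simp [h]
  · rw [min_eq_right h]
    exact ha.trans le_add_tsub

section EmpiricalMeasure

variable {Ω E : Type*} [MeasurableSpace E] {X : ℕ → Ω → E}

lemma lintegral_empMeas (n : ℕ) (X : ℕ → Ω → E) (ω : Ω) {f : E → ℝ≥0∞} (hf : Measurable f) :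
    ∫⁻ x, f x ∂empMeas n X ω = (n : ℝ≥0∞)⁻¹ * ∑ i ∈ Finset.range n, f (X i ω) := by
  simp only [empMeas, lintegral_smul_measure, lintegral_finsetSum_measure, lintegral_dirac' _ hf,
    smul_eq_mul]

instance (n : ℕ) (X : ℕ → Ω → E) (ω : Ω) : IsProbabilityMeasure (empMeas (n + 1) X ω) := by
  constructor
  simp [empMeas, ENNReal.inv_mul_cancel]

variable [MeasurableSpace Ω]

lemma measurable_lintegral_empMeas (hX : ∀ i, Measurable (X i)) (n : ℕ) {f : E → ℝ≥0∞}
    (hf : Measurable f) : Measurable fun ω => ∫⁻ x, f x ∂empMeas n X ω := by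
  simp_rw [lintegral_empMeas n X _ hf]
  fun_prop

lemma lintegral_lintegral_empMeas {Pr : Measure Ω} {P : Measure E} (hX : ∀ i, Measurable (X i))
    (hlaw : ∀ i, Pr.map (X i) = P) (n : ℕ) {f : E → ℝ≥0∞} (hf : Measurable f) :
    ∫⁻ ω, ∫⁻ x, f x ∂empMeas (n + 1) X ω ∂Pr = ∫⁻ x, f x ∂P := by
  have hterm : ∀ i, ∫⁻ ω, f (X i ω) ∂Pr = ∫⁻ x, f x ∂P := fun i => by
    rw [← hlaw i, lintegral_map hf (hX i)]
  simp_rw [lintegral_empMeas _ X _ hf]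
  rw [lintegral_const_mul _ (by fun_prop), lintegral_finsetSum _ fun i _ => by fun_prop]
  simp only [hterm, Finset.sum_const, Finset.card_range, nsmul_eq_mul, ← mul_assoc]
  rw [ENNReal.inv_mul_cancel (by simp) (by simp), one_mul]

lemma measurable_cdf_empMeas {X : ℕ → Ω → ℝ} (hX : ∀ i, Measurable (X i)) (n : ℕ) (x : ℝ) :
    Measurable fun ω => cdf (empMeas (n + 1) X ω) x := by
  simp_rw [cdf_eq_real, measureReal_def, ← lintegral_indicator_one measurableSet_Iic]
  exact (measurable_lintegral_empMeas hX _
    (measurable_one.indicator measurableSet_Iic)).ennreal_toReal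

end EmpiricalMeasure

section StrongLaw

variable {Ω E : Type*} [MeasurableSpace Ω] [MeasurableSpace E] {Pr : Measure Ω} {P : Measure E}
  {X : ℕ → Ω → E}

lemma ae_tendsto_lintegral_empMeas (hX : ∀ i, Measurable (X i))
    (hindep : Pairwise fun i j => IndepFun (X i) (X j) Pr) (hlaw : ∀ i, Pr.map (X i) = P)
    {f : E → ℝ≥0∞} (hf : Measurable f) (hfin : ∫⁻ x, f x ∂P ≠ ∞) :
    ∀ᵐ ω ∂Pr, Tendsto (fun n => ∫⁻ x, f x ∂empMeas n X ω) atTop (𝓝 (∫⁻ x, f x ∂P)) := by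
  set Y : ℕ → Ω → ℝ := fun i ω => (f (X i ω)).toReal
  have hident : ∀ i, IdentDistrib (X i) (X 0) Pr Pr := fun i =>
    ⟨(hX i).aemeasurable, (hX 0).aemeasurable, by rw [hlaw, hlaw]⟩
  have hint : Integrable (Y 0) Pr := by
    have := integrable_toReal_of_lintegral_ne_top hf.aemeasurable hfin
    exact (hlaw 0 ▸ this).comp_measurable (hX 0)
  have hmean : ∫ ω, Y 0 ω ∂Pr = (∫⁻ x, f x ∂P).toReal := by
    rw [← integral_toReal hf.aemeasurable (ae_lt_top hf hfin), ← hlaw 0,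
      integral_map (hX 0).aemeasurable hf.ennreal_toReal.aestronglyMeasurable]
  have hlt : ∀ᵐ ω ∂Pr, ∀ i, f (X i ω) ≠ ∞ := ae_all_iff.2 fun i =>
    ae_of_ae_map (hX i).aemeasurable (p := fun x => f x ≠ ∞)
      (hlaw i ▸ (ae_lt_top hf hfin).mono fun _ h => h.ne)
  filter_upwards [strong_law_ae Y hint (fun i j hij => (hindep hij).comp hf.ennreal_toReal
    hf.ennreal_toReal) (fun i => (hident i).comp hf.ennreal_toReal), hlt] with ω hω hω_fin
  rw [hmean] at hω
  have := ENNReal.tendsto_ofReal hω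
  rw [ENNReal.ofReal_toReal hfin] at this
  refine this.congr' ((eventually_ne_atTop 0).mono fun n hn => ?_)
  dsimp only
  rw [lintegral_empMeas n X ω hf, smul_eq_mul, ENNReal.ofReal_mul (by positivity),
    ENNReal.ofReal_inv_of_pos (by positivity), ENNReal.ofReal_natCast,
    ENNReal.ofReal_sum_of_nonneg fun i _ => ENNReal.toReal_nonneg]
  simp only [ENNReal.ofReal_toReal (hω_fin _)]

lemma ae_tendsto_cdf_empMeas {X : ℕ → Ω → ℝ} {P : Measure ℝ} [IsProbabilityMeasure P]
    (hX : ∀ i, Measurable (X i)) (hindep : Pairwise fun i j => IndepFun (X i) (X j) Pr)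
    (hlaw : ∀ i, Pr.map (X i) = P) :
    ∀ᵐ ω ∂Pr, ∀ q : ℚ, Tendsto (fun n => cdf (empMeas (n + 1) X ω) q) atTop (𝓝 (cdf P q)) := by
  refine ae_all_iff.2 fun q => ?_
  have h := ae_tendsto_lintegral_empMeas hX hindep hlaw (f := (Iic (q : ℝ)).indicator 1)
    (measurable_one.indicator measurableSet_Iic)
    (by rw [lintegral_indicator_one measurableSet_Iic]; exact measure_ne_top P _)
  filter_upwards [h] with ω hω
  simp only [lintegral_indicator_one measurableSet_Iic] at hω
  simp only [cdf_eq_real, measureReal_def]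
  exact (ENNReal.tendsto_toReal (measure_ne_top P _)).comp ((tendsto_add_atTop_iff_nat 1).2 hω)

end StrongLaw

section QuantileGap

variable {p β : ℝ}

def quantileHpGap (p β : ℝ) (μ ν η : Measure ℝ) : ℝ≥0∞ :=
  ∫⁻ t in Ioo 0 1, ENNReal.ofReal (|hp' p (qf μ t - qf η t) - hp' p (qf ν t - qf η t)| ^ β)

lemma ofReal_abs_hp'_sub_hp'_rpow_le (hp : 1 ≤ p) (hβ : 0 ≤ β) (u v w : ℝ) :
    ENNReal.ofReal (|hp' p (u - w) - hp' p (v - w)| ^ β) ≤ ENNReal.ofReal ((2 ^ p * p) ^ β) *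
      (ENNReal.ofReal (|u| ^ (β * (p - 1))) + ENNReal.ofReal (|v| ^ (β * (p - 1))) +
        ENNReal.ofReal (|w| ^ (β * (p - 1)))) := by
  rw [← ENNReal.ofReal_add (by positivity) (by positivity),
    ← ENNReal.ofReal_add (by positivity) (by positivity), ← ENNReal.ofReal_mul (by positivity)]
  exact ENNReal.ofReal_le_ofReal (abs_hp'_sub_hp'_rpow_le hp hβ u v w)

variable {μ ν η : Measure ℝ} [IsProbabilityMeasure μ] [IsProbabilityMeasure ν]
  [IsProbabilityMeasure η]

lemma lintegral_const_mul_comp_qf_add (C : ℝ≥0∞) {f : ℝ → ℝ≥0∞} (hf : Measurable f) :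
    ∫⁻ t in Ioo 0 1, C * (f (qf μ t) + f (qf ν t) + f (qf η t)) =
      C * (∫⁻ x, f x ∂μ + ∫⁻ x, f x ∂ν + ∫⁻ x, f x ∂η) := by
  have hqf : ∀ (κ : Measure ℝ) [IsProbabilityMeasure κ],
      AEMeasurable (fun t => f (qf κ t)) (volume.restrict (Ioo 0 1)) :=
    fun _ _ => hf.comp_aemeasurable aemeasurable_qf
  rw [lintegral_const_mul'' _ (by exact ((hqf μ).add (hqf ν)).add (hqf η)),
    lintegral_add_left' (by exact (hqf μ).add (hqf ν)), lintegral_add_left' (hqf μ),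
    lintegral_comp_qf hf, lintegral_comp_qf hf, lintegral_comp_qf hf]

lemma quantileHpGap_le (hp : 1 ≤ p) (hβ : 0 ≤ β) :
    quantileHpGap p β μ ν η ≤ ENNReal.ofReal ((2 ^ p * p) ^ β) *
      (∫⁻ x, ENNReal.ofReal (|x| ^ (β * (p - 1))) ∂μ +
        ∫⁻ x, ENNReal.ofReal (|x| ^ (β * (p - 1))) ∂ν +
        ∫⁻ x, ENNReal.ofReal (|x| ^ (β * (p - 1))) ∂η) := by
  rw [← lintegral_const_mul_comp_qf_add _ (by fun_prop)]
  exact lintegral_mono fun t => ofReal_abs_hp'_sub_hp'_rpow_le hp hβ _ _ _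

lemma integral_eq_toReal_quantileHpGap :
    ∫ t in Ioo 0 1, |hp' p (qf μ t - qf η t) - hp' p (qf ν t - qf η t)| ^ β =
      (quantileHpGap p β μ ν η).toReal := by
  have := aemeasurable_qf (μ := μ)
  have := aemeasurable_qf (μ := ν)
  have := aemeasurable_qf (μ := η)
  exact integral_eq_lintegral_of_nonneg_ae (ae_of_all _ fun t => by positivity)
    (by fun_prop : AEMeasurable _ _).aestronglyMeasurable

end QuantileGap

lemma measurable_quantileHpGap {p β : ℝ} {α : Type*} [MeasurableSpace α] {κ : α → Measure ℝ}
    [∀ a, IsProbabilityMeasure (κ a)] (hκ : ∀ x, Measurable fun a => cdf (κ a) x)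
    (ν η : Measure ℝ) [IsProbabilityMeasure ν] [IsProbabilityMeasure η] :
    Measurable fun a => quantileHpGap p β (κ a) ν η := by
  have hqκ := measurable_indicator_qf hκ
  have hqν := measurable_indicator_qf (κ := fun _ : α => ν) fun _ => measurable_const
  have hqη := measurable_indicator_qf (κ := fun _ : α => η) fun _ => measurable_const
  have hF := (((measurable_hp' (p := p)).comp (hqκ.sub hqη)).sub
    ((measurable_hp' (p := p)).comp (hqν.sub hqη))).abs.pow_const β |>.ennreal_ofReal
  convert hF.lintegral_prod_right' (ν := volume.restrict (Ioo 0 1)) using 1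
  funext a
  refine setLIntegral_congr_fun measurableSet_Ioo fun t ht => ?_
  simp only [Function.comp_apply, Pi.sub_apply, indicator_of_mem ht]

lemma tendsto_quantileHpGap {p β : ℝ} (hp : 1 < p) (hβ : 0 < β) {μs : ℕ → Measure ℝ}
    [∀ n, IsProbabilityMeasure (μs n)] {μ η : Measure ℝ} [IsProbabilityMeasure μ]
    [IsProbabilityMeasure η] (hcdf : ∀ q : ℚ, Tendsto (fun n => cdf (μs n) q) atTop (𝓝 (cdf μ q)))
    (hmom : Tendsto (fun n => ∫⁻ x, ENNReal.ofReal (|x| ^ (β * (p - 1))) ∂μs n) atTop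
      (𝓝 (∫⁻ x, ENNReal.ofReal (|x| ^ (β * (p - 1))) ∂μ)))
    (hμ : ∫⁻ x, ENNReal.ofReal (|x| ^ (β * (p - 1))) ∂μ ≠ ∞)
    (hη : ∫⁻ x, ENNReal.ofReal (|x| ^ (β * (p - 1))) ∂η ≠ ∞) :
    Tendsto (fun n => quantileHpGap p β (μs n) μ η) atTop (𝓝 0) := by
  set ρ : ℝ → ℝ≥0∞ := fun x => ENNReal.ofReal (|x| ^ (β * (p - 1)))
  have hρ : Continuous ρ := ENNReal.continuous_ofReal.comp
    (continuous_abs.rpow_const fun _ => Or.inr (mul_nonneg hβ.le (by linarith)))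
  set C := ENNReal.ofReal ((2 ^ p * p) ^ β)
  have hqf := ae_tendsto_qf_of_tendsto_cdf hcdf
  have hqfm : ∀ (κ : Measure ℝ) [IsProbabilityMeasure κ],
      AEMeasurable (qf κ) (volume.restrict (Ioo 0 1)) := fun _ _ => aemeasurable_qf
  have hρm : ∀ (κ : Measure ℝ) [IsProbabilityMeasure κ],
      AEMeasurable (fun t => ρ (qf κ t)) (volume.restrict (Ioo 0 1)) :=
    fun κ _ => hρ.measurable.comp_aemeasurable (hqfm κ)
  refine tendsto_lintegral_zero_of_le_of_tendsto
    (G := fun n t => C * (ρ (qf (μs n) t) + ρ (qf μ t) + ρ (qf η t)))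
    (g := fun t => C * (ρ (qf μ t) + ρ (qf μ t) + ρ (qf η t)))
    (fun n => ?_) (fun n => ?_) ?_
    (fun n => ae_of_all _ fun t => ofReal_abs_hp'_sub_hp'_rpow_le hp.le hβ.le _ _ _) ?_ ?_ ?_ ?_
  · have := hqfm (μs n); have := hqfm μ; have := hqfm η
    fun_prop
  · exact ((((hρm (μs n)).add (hρm μ)).add (hρm η))).const_mul C
  · exact ((((hρm μ).add (hρm μ)).add (hρm η))).const_mul C
  · filter_upwards [hqf] with t ht
    have hcont : Continuous fun y =>
        ENNReal.ofReal (|hp' p (y - qf η t) - hp' p (qf μ t - qf η t)| ^ β) :=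
      ENNReal.continuous_ofReal.comp ((((continuous_hp' hp).comp
        (continuous_id.sub continuous_const)).sub continuous_const).abs.rpow_const
          fun _ => Or.inr hβ.le)
    simpa [Function.comp_def, Real.zero_rpow hβ.ne'] using (hcont.tendsto _).comp ht
  · filter_upwards [hqf] with t ht
    exact ENNReal.Tendsto.const_mul ((((hρ.tendsto _).comp ht).add tendsto_const_nhds).add
      tendsto_const_nhds) (Or.inr ENNReal.ofReal_ne_top)
  · simp only [lintegral_const_mul_comp_qf_add C hρ.measurable]
    exact ENNReal.Tendsto.const_mul ((hmom.add tendsto_const_nhds).add tendsto_const_nhds)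
      (Or.inr ENNReal.ofReal_ne_top)
  · rw [lintegral_const_mul_comp_qf_add C hρ.measurable]
    exact ENNReal.mul_ne_top ENNReal.ofReal_ne_top (by simp [ρ, hμ, hη])

lemma tendsto_lintegral_quantileHpGap_empMeas {Ω : Type*} [MeasurableSpace Ω] {Pr : Measure Ω}
    [IsProbabilityMeasure Pr] {p β : ℝ} (hp : 1 < p) (hβ : 0 < β) {P Q : Measure ℝ}
    [IsProbabilityMeasure P] [IsProbabilityMeasure Q] {X : ℕ → Ω → ℝ} (hX : ∀ i, Measurable (X i))
    (hindep : Pairwise fun i j => IndepFun (X i) (X j) Pr) (hlaw : ∀ i, Pr.map (X i) = P)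
    (hP : ∫⁻ x, ENNReal.ofReal (|x| ^ (β * (p - 1))) ∂P ≠ ∞)
    (hQ : ∫⁻ x, ENNReal.ofReal (|x| ^ (β * (p - 1))) ∂Q ≠ ∞) :
    Tendsto (fun n => ∫⁻ ω, quantileHpGap p β (empMeas (n + 1) X ω) P Q ∂Pr) atTop (𝓝 0) := by
  set ρ : ℝ → ℝ≥0∞ := fun x => ENNReal.ofReal (|x| ^ (β * (p - 1)))
  have hρ : Measurable ρ := by fun_prop
  have hmom := ae_tendsto_lintegral_empMeas hX hindep hlaw hρ hP
  have hm : ∀ n, Measurable fun ω => ∫⁻ x, ρ x ∂empMeas (n + 1) X ω := fun n =>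
    measurable_lintegral_empMeas hX _ hρ
  set C := ENNReal.ofReal ((2 ^ p * p) ^ β)
  refine tendsto_lintegral_zero_of_le_of_tendsto
    (G := fun n ω => C * (∫⁻ x, ρ x ∂empMeas (n + 1) X ω + ∫⁻ x, ρ x ∂P + ∫⁻ x, ρ x ∂Q))
    (g := fun _ => C * (∫⁻ x, ρ x ∂P + ∫⁻ x, ρ x ∂P + ∫⁻ x, ρ x ∂Q))
    (fun n => (measurable_quantileHpGap (measurable_cdf_empMeas hX n) P Q).aemeasurable)
    (fun n => ((((hm n).add_const _).add_const _).const_mul C).aemeasurable) aemeasurable_const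
    (fun n => ae_of_all _ fun ω => quantileHpGap_le hp.le hβ.le) ?_ ?_ ?_ ?_
  · filter_upwards [ae_tendsto_cdf_empMeas hX hindep hlaw, hmom] with ω hcdf hmomω
    exact tendsto_quantileHpGap hp hβ hcdf ((tendsto_add_atTop_iff_nat 1).2 hmomω) hP hQ
  · filter_upwards [hmom] with ω hmomω
    exact ENNReal.Tendsto.const_mul
      ((((tendsto_add_atTop_iff_nat 1).2 hmomω).add_const _).add_const _)
      (Or.inr ENNReal.ofReal_ne_top)
  · refine tendsto_const_nhds.congr fun n => ?_
    rw [lintegral_const_mul _ (((hm n).add_const _).add_const _),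
      lintegral_add_right _ measurable_const, lintegral_add_right _ measurable_const,
      lintegral_lintegral_empMeas hX hlaw n hρ]
    simp only [lintegral_const, measure_univ, mul_one]
  · simpa using ENNReal.mul_ne_top ENNReal.ofReal_ne_top (by simp [ρ, hP, hQ])

lemma integral_integral_eq_toReal_lintegral_quantileHpGap {p β : ℝ} {α : Type*}
    [MeasurableSpace α] {Pr : Measure α} {κ : α → Measure ℝ} [∀ a, IsProbabilityMeasure (κ a)]
    (hκ : ∀ x, Measurable fun a => cdf (κ a) x) {ν η : Measure ℝ} [IsProbabilityMeasure ν]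
    [IsProbabilityMeasure η] (hfin : ∫⁻ a, quantileHpGap p β (κ a) ν η ∂Pr ≠ ∞) :
    ∫ a, (∫ t in Ioo 0 1, |hp' p (qf (κ a) t - qf η t) - hp' p (qf ν t - qf η t)| ^ β) ∂Pr =
      (∫⁻ a, quantileHpGap p β (κ a) ν η ∂Pr).toReal := by
  simp_rw [integral_eq_toReal_quantileHpGap]
  have hm := measurable_quantileHpGap (p := p) (β := β) hκ ν η
  exact integral_toReal hm.aemeasurable (ae_lt_top hm hfin)

lemma lintegral_ofReal_abs_rpow_ne_top {μ : Measure ℝ} [IsFiniteMeasure μ] {r s : ℝ}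
    (hr : 0 ≤ r) (hrs : r ≤ s) (h : Integrable (fun x => |x| ^ s) μ) :
    ∫⁻ x, ENNReal.ofReal (|x| ^ r) ∂μ ≠ ∞ := by
  have hle : ∀ x : ℝ, |x| ^ r ≤ 1 + |x| ^ s := fun x => by
    rcases le_total |x| 1 with hx | hx
    · linarith [Real.rpow_le_one (abs_nonneg x) hx hr, Real.rpow_nonneg (abs_nonneg x) s]
    · linarith [Real.rpow_le_rpow_of_exponent_le hx hrs]
  exact ((lintegral_mono fun x => ENNReal.ofReal_le_ofReal (hle x)).trans_lt
    ((integrable_const 1).add h).lintegral_lt_top).ne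

/-- For `p > 1`, `β ≥ 1`, `γ > 0` and probability measures `P, Q` on `ℝ`
with finite moments of order `β(p−1)(1+γ)`, with `Fₙ` the empirical distribution of `n`
i.i.d. samples from `P`,
`E[∫₀¹ |h_p'(Fₙ^{-1}(t) − G^{-1}(t)) − h_p'(F^{-1}(t) − G^{-1}(t))|^β dt] → 0`. -/
theorem statement12 {Ω : Type*} [MeasurableSpace Ω] (Pr : Measure Ω) [IsProbabilityMeasure Pr]
    (p β γ : ℝ) (hp : 1 < p) (hβ : 1 ≤ β) (hγ : 0 < γ)
    (P Q : Measure ℝ) [IsProbabilityMeasure P] [IsProbabilityMeasure Q]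
    (hPmom : Integrable (fun x => |x| ^ (β * (p - 1) * (1 + γ))) P)
    (hQmom : Integrable (fun x => |x| ^ (β * (p - 1) * (1 + γ))) Q)
    (X : ℕ → Ω → ℝ) (hXm : ∀ i, Measurable (X i))
    (hindep : iIndepFun X Pr)
    (hlaw : ∀ i, Pr.map (X i) = P) :
    Tendsto (fun n => ∫ ω, (∫ t in Set.Ioo (0:ℝ) 1,
        |hp' p (qf (empMeas n X ω) t - qf Q t) - hp' p (qf P t - qf Q t)| ^ β) ∂Pr)
      atTop (nhds 0) := by
  have hβ0 : 0 < β := by linarith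
  have hr : 0 ≤ β * (p - 1) := mul_nonneg hβ0.le (by linarith)
  have hrs : β * (p - 1) ≤ β * (p - 1) * (1 + γ) := le_mul_of_one_le_right hr (by linarith)
  have hlim := tendsto_lintegral_quantileHpGap_empMeas hp hβ0 hXm
    (fun _ _ hij => hindep.indepFun hij) hlaw (lintegral_ofReal_abs_rpow_ne_top hr hrs hPmom)
    (lintegral_ofReal_abs_rpow_ne_top hr hrs hQmom)
  refine (tendsto_add_atTop_iff_nat 1).1 ?_
  refine (ENNReal.toReal_zero ▸ (ENNReal.tendsto_toReal ENNReal.zero_ne_top).comp hlim).congr' ?_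
  filter_upwards [hlim.eventually_lt_const ENNReal.zero_lt_top] with n hn
  exact (integral_integral_eq_toReal_lintegral_quantileHpGap
    (measurable_cdf_empMeas hXm n) hn.ne).symm
end
end
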